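/- arXiv:1601.05491 — 3 statements merged into one kernel-verified Lean document; each statement's English description precedes it below -/
import Mathlib

section
/- Let p be a positive nonsquare integer and let m, n be positive integers satisfying n² − p·m² = 1. Then √p = (m·p/n) · Σ_{k=0}^{∞} ((1/2)_k / k!) · (1/(p·m² + 1))^k, where the series on the right converges. -/
/-- The shifted factorial (Pochhammer symbol): `(x)_0 = 1` and
`(x)_n = x * (x+1) * ... * (x+n-1)`. -/
noncomputable def shiftedFactorial (x : ℝ) (n : ℕ) : ℝ :=
  ∏ i ∈ Finset.range n, (x + i)

/-!
The series is the binomial series of `(1 - x) ^ (-1/2)` at `x = 1 / (p m² + 1)`, whose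
coefficients `choose (k - 1/2) k` are `(1/2)_k / k!`. The Pell equation makes `p m² + 1 = n²`,
so `1 - x = (m √p / n)²` and the sum is `n / (m √p)`.
-/

open scoped Nat

theorem shiftedFactorial_eq_ascPochhammer_eval (x : ℝ) (n : ℕ) :
    shiftedFactorial x n = (ascPochhammer ℝ n).eval x := by
  induction n with
  | zero => simp [shiftedFactorial]
  | succ n ih =>
    rw [shiftedFactorial, Finset.prod_range_succ, ← shiftedFactorial, ih, ascPochhammer_succ_eval]

theorem Ring.choose_add_natCast_sub_one {R : Type*} [Field R] [CharZero R] (a : R) (n : ℕ) :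
    Ring.choose (a + n - 1) n = (ascPochhammer R n).eval a / n ! := by
  rw [Ring.choose_eq_smul, Polynomial.descPochhammer_smeval_eq_ascPochhammer,
    Polynomial.ascPochhammer_smeval_eq_eval, smul_eq_mul, inv_mul_eq_div]
  ring_nf

theorem hasSum_shiftedFactorial_div_factorial_mul_pow (a : ℝ) {x : ℝ} (hx : |x| < 1) :
    HasSum (fun k => shiftedFactorial a k / k ! * x ^ k) (1 / (1 - x) ^ a) := by
  have h := (Real.one_div_one_sub_rpow_hasFPowerSeriesOnBall_zero a).hasSum
    (y := x) (by simpa [edist_dist, Real.dist_eq] using hx)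
  simpa [FormalMultilinearSeries.ofScalars, Ring.choose_add_natCast_sub_one,
    shiftedFactorial_eq_ascPochhammer_eval, mul_comm] using h

theorem sqrt_series_1F0_pos_general (p m n : ℕ) (hp : 0 < p)
    (hm : 0 < m) (hn : 0 < n) (hpell : (n : ℤ) ^ 2 - p * m ^ 2 = 1) :
    Summable (fun k : ℕ => shiftedFactorial (1/2) k / (Nat.factorial k : ℝ) * (1 / (p * m ^ 2 + 1) : ℝ) ^ k) ∧
    Real.sqrt p = (m * p / n : ℝ) *
      ∑' k : ℕ, shiftedFactorial (1/2) k / (Nat.factorial k : ℝ) * (1 / (p * m ^ 2 + 1) : ℝ) ^ k := by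
  have hpm : (0 : ℝ) < p * m ^ 2 := by positivity
  have hn2 : (n : ℝ) ^ 2 = p * m ^ 2 + 1 := by exact_mod_cast sub_eq_iff_eq_add'.mp hpell
  have hx : |(1 / (p * m ^ 2 + 1) : ℝ)| < 1 := by
    rw [abs_of_pos (by positivity), div_lt_one (by positivity)]
    linarith
  have hsum := hasSum_shiftedFactorial_div_factorial_mul_pow (1 / 2) hx
  refine ⟨hsum.summable, ?_⟩
  have hroot : (1 - 1 / (p * m ^ 2 + 1) : ℝ) ^ (1 / 2 : ℝ) = m * √p / n := by
    rw [← Real.sqrt_eq_rpow, ← hn2, Real.sqrt_eq_iff_mul_self_eq_of_pos (by positivity)]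
    field_simp
    rw [hn2, Real.sq_sqrt (by positivity)]
    ring
  rw [hsum.tsum_eq, hroot]
  field_simp
  rw [Real.sq_sqrt (by positivity)]

theorem sqrt_series_1F0_pos (p m n : ℕ) (hp : 0 < p) (hps : ¬ IsSquare p)
    (hm : 0 < m) (hn : 0 < n) (hpell : (n : ℤ) ^ 2 - p * m ^ 2 = 1) :
    Summable (fun k : ℕ => shiftedFactorial (1/2) k / (Nat.factorial k : ℝ) * (1 / (p * m ^ 2 + 1) : ℝ) ^ k) ∧
    Real.sqrt p = (m * p / n : ℝ) *
      ∑' k : ℕ, shiftedFactorial (1/2) k / (Nat.factorial k : ℝ) * (1 / (p * m ^ 2 + 1) : ℝ) ^ k :=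
  sqrt_series_1F0_pos_general p m n hp hm hn hpell
end

section
/- Let p be a positive nonsquare integer and let m, n be positive integers satisfying n² − p·m² = 1. Then √p = (m·p/n) · Σ_{k=0}^{∞} ((1/4)_k (3/4)_k / (k! (3/2)_k)) · (4·p·m²/(p·m² + 1)²)^k, where the series on the right converges. -/
/-! The coefficient `(1/4)_k (3/4)_k / (k! (3/2)_k)` equals `C_{2k} / 16^k` for the Catalan
numbers `Cₙ`, so `∑ₖ coeff k * (w^2)^k` is the even part of the Catalan generating function
`c(y) = ∑ₙ Cₙ yⁿ` at `y = w/4`. Since `1 - 2 y c(y) = √(1 - 4y)`, the sum equals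
`(√(1 + w) - √(1 - w)) / w`. For `s = m √p` and `w = 2s / (1 + s²)` one has
`w² = 4pm² / (pm² + 1)²`, and the Pell equation `n² = 1 + s²` gives `√(1 ± w) = (s ± 1) / n`,
so the sum is `n / s` and `(mp/n) (n/s) = √p`. -/

open Finset

theorem catalan_le_four_pow (n : ℕ) : catalan n ≤ 4 ^ n :=
  calc catalan n ≤ (n + 1) * catalan n := Nat.le_mul_of_pos_left _ n.succ_pos
    _ = n.centralBinom := succ_mul_catalan_eq_centralBinom n
    _ ≤ 4 ^ n := Nat.centralBinom_le_four_pow n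

theorem succ_succ_mul_catalan_succ (n : ℕ) :
    (n + 2) * catalan (n + 1) = 2 * (2 * n + 1) * catalan n := by
  refine Nat.eq_of_mul_eq_mul_left n.succ_pos ?_
  calc (n + 1) * ((n + 2) * catalan (n + 1)) = (n + 1) * (n + 1).centralBinom := by
        rw [← succ_mul_catalan_eq_centralBinom]
    _ = 2 * (2 * n + 1) * n.centralBinom := Nat.succ_mul_centralBinom_succ n
    _ = (n + 1) * (2 * (2 * n + 1) * catalan n) := by
        rw [← succ_mul_catalan_eq_centralBinom]; ring

theorem shiftedFactorial_succ (x : ℝ) (k : ℕ) :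
    shiftedFactorial x (k + 1) = shiftedFactorial x k * (x + k) :=
  prod_range_succ _ _

theorem shiftedFactorial_pos {x : ℝ} (hx : 0 < x) (k : ℕ) : 0 < shiftedFactorial x k :=
  prod_pos fun i _ => by positivity

theorem shiftedFactorial_quarter_div_eq_catalan (k : ℕ) :
    shiftedFactorial (1/4) k * shiftedFactorial (3/4) k
        / ((Nat.factorial k : ℝ) * shiftedFactorial (3/2) k)
      = catalan (2 * k) / 16 ^ k := by
  induction k with
  | zero => simp [shiftedFactorial]
  | succ k ih =>
    have hodd := congrArg (Nat.cast : ℕ → ℝ) (succ_succ_mul_catalan_succ (2 * k + 1))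
    have heven := congrArg (Nat.cast : ℕ → ℝ) (succ_succ_mul_catalan_succ (2 * k))
    have hsf := shiftedFactorial_pos (x := 3/2) (by norm_num) k
    rw [div_eq_div_iff (by positivity) (by positivity)] at ih
    rw [shiftedFactorial_succ, shiftedFactorial_succ, shiftedFactorial_succ, Nat.factorial_succ,
      show 2 * (k + 1) = 2 * k + 1 + 1 by ring, div_eq_div_iff (by positivity) (by positivity)]
    push_cast at hodd heven ih ⊢
    linear_combination (16 * ((k : ℝ) + 1/4) * (k + 3/4)) * ih
      - (k.factorial * shiftedFactorial (3/2) k)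
        * ((2 * (k : ℝ) + 2) / 4 * hodd + (4 * (k : ℝ) + 3) / 2 * heven)

theorem norm_catalan_mul_pow_le (n : ℕ) (y : ℝ) :
    ‖(catalan n : ℝ) * y ^ n‖ ≤ (4 * |y|) ^ n := by
  rw [norm_mul, norm_pow, Real.norm_natCast, Real.norm_eq_abs, mul_pow]
  gcongr
  exact_mod_cast catalan_le_four_pow n

theorem summable_norm_catalan_mul_pow {y : ℝ} (hy : |y| < 1/4) :
    Summable fun n : ℕ => ‖(catalan n : ℝ) * y ^ n‖ :=
  (summable_geometric_of_lt_one (by positivity) (by linarith)).of_nonneg_of_le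
    (fun _ => norm_nonneg _) (fun n => norm_catalan_mul_pow_le n y)

noncomputable def catalanGF (y : ℝ) : ℝ := ∑' n : ℕ, (catalan n : ℝ) * y ^ n

theorem hasSum_catalanGF {y : ℝ} (hy : |y| < 1/4) :
    HasSum (fun n : ℕ => (catalan n : ℝ) * y ^ n) (catalanGF y) :=
  (summable_norm_catalan_mul_pow hy).of_norm.hasSum

theorem catalanGF_zero : catalanGF 0 = 1 := by
  rw [catalanGF, tsum_eq_single 0 fun n hn => by simp [zero_pow hn]]
  simp

theorem catalanGF_sq_mul_add_one {y : ℝ} (hy : |y| < 1/4) :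
    catalanGF y ^ 2 * y + 1 = catalanGF y := by
  have hnorm := summable_norm_catalan_mul_pow hy
  have hcauchy : catalanGF y ^ 2 = ∑' n : ℕ, (catalan (n + 1) : ℝ) * y ^ n := by
    rw [sq, catalanGF, tsum_mul_tsum_eq_tsum_sum_antidiagonal_of_summable_norm hnorm hnorm]
    refine tsum_congr fun n => ?_
    rw [catalan_succ', Nat.cast_sum, sum_mul]
    refine sum_congr rfl fun ij hij => ?_
    rw [HasAntidiagonal.mem_antidiagonal] at hij
    rw [← hij, pow_add]
    push_cast
    ring
  rw [hcauchy, ← tsum_mul_right, catalanGF, (hasSum_catalanGF hy).summable.tsum_eq_zero_add]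
  simp only [catalan_zero, Nat.cast_one, pow_zero, mul_one, pow_succ, mul_assoc]
  ring

theorem continuousOn_catalanGF {r : ℝ} (hr : |r| < 1/4) :
    ContinuousOn catalanGF (Set.Icc (-r) r) := by
  refine continuousOn_tsum (u := fun n => (4 * |r|) ^ n)
    (fun n => (continuous_const.mul (continuous_pow n)).continuousOn)
    (summable_geometric_of_lt_one (by positivity) (by linarith)) fun n y hy => ?_
  have hyr : |y| ≤ |r| :=
    abs_le.2 ⟨by linarith [le_abs_self r, hy.1], hy.2.trans (le_abs_self r)⟩
  exact (norm_catalan_mul_pow_le n y).trans (pow_le_pow_left₀ (by positivity) (by linarith) n)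

theorem one_sub_two_mul_catalanGF {y : ℝ} (hy : |y| < 1/4) :
    1 - 2 * y * catalanGF y = √(1 - 4 * y) := by
  -- Both sides square to `1 - 4t` and `√(1 - 4t)` never vanishes on `[-|y|, |y|]`,
  -- so connectedness propagates the equality at `t = 0`.
  have hS : ∀ t ∈ Set.Icc (-|y|) |y|, |t| < 1/4 := fun t ht => (abs_le.2 ht).trans_lt hy
  refine isPreconnected_Icc.eq_of_sq_eq (f := fun t => 1 - 2 * t * catalanGF t)
    (g := fun t => √(1 - 4 * t)) ?_ ?_ (fun t ht => ?_) (fun {t} ht => ?_)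
    (y := 0) ⟨by simp, by simp⟩ (by simp [catalanGF_zero]) ⟨neg_abs_le y, le_abs_self y⟩
  · exact continuousOn_const.sub ((continuousOn_const.mul continuousOn_id).mul
      (continuousOn_catalanGF ((abs_abs y).symm ▸ hy)))
  · fun_prop
  · have hfun := catalanGF_sq_mul_add_one (hS t ht)
    have := abs_lt.1 (hS t ht)
    simp only [Pi.pow_apply]
    rw [Real.sq_sqrt (by linarith)]
    linear_combination 4 * t * hfun
  · have := abs_lt.1 (hS t ht)
    exact (Real.sqrt_pos.2 (by linarith)).ne'

theorem hasSum_catalan_two_mul {y : ℝ} (hy : |y| < 1/4) :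
    HasSum (fun k : ℕ => (catalan (2 * k) : ℝ) * y ^ (2 * k))
      ((catalanGF y + catalanGF (-y)) / 2) := by
  have hsum := ((hasSum_catalanGF hy).add
    (hasSum_catalanGF ((abs_neg y).symm ▸ hy))).div_const 2
  have hodd : ∀ n ∉ Set.range (2 * ·),
      ((catalan n : ℝ) * y ^ n + catalan n * (-y) ^ n) / 2 = 0 := by
    intro n hn
    have : Odd n := Nat.odd_iff.2 (by by_contra h; exact hn ⟨n / 2, by simp only; omega⟩)
    rw [this.neg_pow]
    ring
  convert ((mul_right_injective₀ two_ne_zero).hasSum_iff hodd).2 hsum using 1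
  funext k
  simp only [Function.comp_apply, pow_mul, neg_sq]
  ring

theorem hasSum_hypergeometric_quarter {w : ℝ} (hw : |w| < 1) (hw0 : w ≠ 0) :
    HasSum (fun k : ℕ => shiftedFactorial (1/4) k * shiftedFactorial (3/4) k
        / ((Nat.factorial k : ℝ) * shiftedFactorial (3/2) k) * (w ^ 2) ^ k)
      ((√(1 + w) - √(1 - w)) / w) := by
  have hy : |w / 4| < 1/4 := by rw [abs_div, abs_of_pos (four_pos : (0 : ℝ) < 4)]; linarith
  have hy' : |-(w / 4)| < 1/4 := by rwa [abs_neg]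
  have hplus := one_sub_two_mul_catalanGF hy
  have hminus := one_sub_two_mul_catalanGF hy'
  convert hasSum_catalan_two_mul hy using 1
  · ext k
    rw [shiftedFactorial_quarter_div_eq_catalan, ← pow_mul, div_pow, pow_mul 4]
    field_simp
    norm_num
  · rw [show 1 - 4 * (w / 4) = 1 - w by ring] at hplus
    rw [show 1 - 4 * -(w / 4) = 1 + w by ring] at hminus
    rw [div_eq_iff hw0]
    linear_combination hplus - hminus

theorem sqrt_one_add_sub_sqrt_one_sub_div {s : ℝ} (hs : 1 ≤ s) :
    (√(1 + 2 * s / (1 + s ^ 2)) - √(1 - 2 * s / (1 + s ^ 2))) / (2 * s / (1 + s ^ 2))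
      = √(1 + s ^ 2) / s := by
  have hr : 0 < √(1 + s ^ 2) := Real.sqrt_pos.2 (by positivity)
  have hr2 : √(1 + s ^ 2) ^ 2 = 1 + s ^ 2 := Real.sq_sqrt (by positivity)
  have hplus : √(1 + 2 * s / (1 + s ^ 2)) = (s + 1) / √(1 + s ^ 2) := by
    rw [show 1 + 2 * s / (1 + s ^ 2) = ((s + 1) / √(1 + s ^ 2)) ^ 2 by
      rw [div_pow, hr2]; field_simp; ring]
    exact Real.sqrt_sq (by positivity)
  have hminus : √(1 - 2 * s / (1 + s ^ 2)) = (s - 1) / √(1 + s ^ 2) := by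
    rw [show 1 - 2 * s / (1 + s ^ 2) = ((s - 1) / √(1 + s ^ 2)) ^ 2 by
      rw [div_pow, hr2]; field_simp; ring]
    exact Real.sqrt_sq (div_nonneg (by linarith) hr.le)
  rw [hplus, hminus]
  field_simp
  linear_combination -2 * hr2

theorem sqrt_series_2F1_pos_general (p m n : ℕ) (hps : ¬ IsSquare p)
    (hm : 0 < m) (hpell : (n : ℤ) ^ 2 - p * m ^ 2 = 1) :
    Summable (fun k : ℕ => shiftedFactorial (1/4) k * shiftedFactorial (3/4) k / ((Nat.factorial k : ℝ) * shiftedFactorial (3/2) k) * (4 * p * m ^ 2 / (p * m ^ 2 + 1) ^ 2 : ℝ) ^ k) ∧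
    Real.sqrt p = (m * p / n : ℝ) *
      ∑' k : ℕ, shiftedFactorial (1/4) k * shiftedFactorial (3/4) k / ((Nat.factorial k : ℝ) * shiftedFactorial (3/2) k) * (4 * p * m ^ 2 / (p * m ^ 2 + 1) ^ 2 : ℝ) ^ k := by
  have hp : 2 ≤ p := by
    by_contra! h
    interval_cases p
    exacts [hps ⟨0, rfl⟩, hps ⟨1, rfl⟩]
  set s := √p * m with hs_def
  have hs2 : s ^ 2 = p * m ^ 2 := by rw [mul_pow, Real.sq_sqrt (Nat.cast_nonneg p)]
  have hs : 1 < s := one_lt_mul_of_lt_of_le (by rw [Real.lt_sqrt zero_le_one]; exact_mod_cast hp)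
    (by exact_mod_cast hm)
  have hn : (n : ℝ) = √(1 + s ^ 2) := by
    rw [hs2, eq_comm, Real.sqrt_eq_iff_eq_sq (by positivity) (Nat.cast_nonneg n)]
    exact_mod_cast (by linarith : (n : ℤ) ^ 2 = 1 + p * m ^ 2).symm
  have hw : |2 * s / (1 + s ^ 2)| < 1 := by
    rw [abs_of_pos (by positivity), div_lt_one (by positivity)]
    nlinarith
  have hz : (4 * p * m ^ 2 / (p * m ^ 2 + 1) ^ 2 : ℝ) = (2 * s / (1 + s ^ 2)) ^ 2 := by
    rw [div_pow, mul_pow, hs2]; ring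
  have hsum := hasSum_hypergeometric_quarter hw (by positivity)
  rw [← hz, sqrt_one_add_sub_sqrt_one_sub_div hs.le, ← hn] at hsum
  refine ⟨hsum.summable, ?_⟩
  have hn0 : (n : ℝ) ≠ 0 := by rw [hn]; positivity
  rw [hsum.tsum_eq, hs_def, ← Real.div_sqrt]
  field_simp
  rw [Real.sq_sqrt (Nat.cast_nonneg p)]

theorem sqrt_series_2F1_pos (p m n : ℕ) (hp : 0 < p) (hps : ¬ IsSquare p)
    (hm : 0 < m) (hn : 0 < n) (hpell : (n : ℤ) ^ 2 - p * m ^ 2 = 1) :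
    Summable (fun k : ℕ => shiftedFactorial (1/4) k * shiftedFactorial (3/4) k / ((Nat.factorial k : ℝ) * shiftedFactorial (3/2) k) * (4 * p * m ^ 2 / (p * m ^ 2 + 1) ^ 2 : ℝ) ^ k) ∧
    Real.sqrt p = (m * p / n : ℝ) *
      ∑' k : ℕ, shiftedFactorial (1/4) k * shiftedFactorial (3/4) k / ((Nat.factorial k : ℝ) * shiftedFactorial (3/2) k) * (4 * p * m ^ 2 / (p * m ^ 2 + 1) ^ 2 : ℝ) ^ k :=
  sqrt_series_2F1_pos_general p m n hps hm hpell
end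

section
/- The following series identity holds: √3 = (362/209) · Σ_{k=0}^{∞} ((1/2)_k / k!) · (−1/131043)^k, where the series on the right converges. -/
open Polynomial Finset

lemma sf_succ (x : ℝ) (n : ℕ) :
    shiftedFactorial x (n+1) = shiftedFactorial x n * (x + n) := by
  simp [shiftedFactorial, Finset.prod_range_succ]

lemma desc_smeval_neg (x : ℝ) (k : ℕ) :
    (descPochhammer ℤ k).smeval (-x) = (-1)^k * shiftedFactorial x k := by
  induction k with
  | zero => simp [shiftedFactorial]
  | succ k ih =>
    rw [descPochhammer_succ_right, smeval_mul, ih, sf_succ]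
    have : (X - (k : ℤ[X])).smeval (-x) = -(x + k) := by
      simp [smeval_sub, smeval_X, smeval_natCast]; ring
    rw [this]; ring

lemma sf_one (n : ℕ) : shiftedFactorial 1 n = n.factorial := by
  induction n with
  | zero => simp [shiftedFactorial]
  | succ n ih => rw [sf_succ, ih, Nat.factorial_succ]; push_cast; ring

lemma sf_half_nonneg (n : ℕ) : 0 ≤ shiftedFactorial (1/2) n := by
  apply Finset.prod_nonneg; intro i _; positivity

lemma sf_half_le (n : ℕ) : shiftedFactorial (1/2) n ≤ n.factorial := by
  rw [← sf_one]
  apply Finset.prod_le_prod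
  · intro i _; positivity
  · intro i _; norm_num

lemma vandermonde_half (n : ℕ) :
    ∑ ij ∈ antidiagonal n,
      shiftedFactorial (1/2) ij.1 / (ij.1.factorial : ℝ) *
        (shiftedFactorial (1/2) ij.2 / (ij.2.factorial : ℝ)) = 1 := by
  have h := Ring.descPochhammer_smeval_add (R := ℝ) (r := -(1/2)) (s := -(1/2)) n (Commute.all _ _)
  have hl : (-(1/2 : ℝ)) + -(1/2) = -1 := by norm_num
  rw [hl, desc_smeval_neg 1 n, sf_one n] at h
  have h2 : ∀ ij ∈ antidiagonal n,
      (Nat.choose n ij.1 : ℝ) * ((descPochhammer ℤ ij.1).smeval (-(1/2):ℝ) *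
        (descPochhammer ℤ ij.2).smeval (-(1/2):ℝ))
      = (-1)^n * ((Nat.choose n ij.1 : ℝ) *
          (shiftedFactorial (1/2) ij.1 * shiftedFactorial (1/2) ij.2)) := by
    intro ij hij
    rw [desc_smeval_neg, desc_smeval_neg]
    have : ij.1 + ij.2 = n := by simpa using (Finset.HasAntidiagonal.mem_antidiagonal.mp hij)
    rw [← this, pow_add]; ring
  rw [Finset.sum_congr rfl h2, ← Finset.mul_sum] at h
  have hn : ((-1:ℝ))^n ≠ 0 := by positivity
  have key := mul_left_cancel₀ hn h
  have h3 : ∀ ij ∈ antidiagonal n,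
      shiftedFactorial (1/2) ij.1 / (ij.1.factorial : ℝ) *
        (shiftedFactorial (1/2) ij.2 / (ij.2.factorial : ℝ))
      = (Nat.choose n ij.1 : ℝ) *
          (shiftedFactorial (1/2) ij.1 * shiftedFactorial (1/2) ij.2) / n.factorial := by
    intro ij hij
    have hmem : ij.1 + ij.2 = n := by simpa using (Finset.HasAntidiagonal.mem_antidiagonal.mp hij)
    have hle : ij.1 ≤ n := by omega
    have hc := Nat.choose_mul_factorial_mul_factorial hle
    have hsub : n - ij.1 = ij.2 := by omega
    rw [hsub] at hc
    have hcR : (n.choose ij.1 : ℝ) * ij.1.factorial * ij.2.factorial = n.factorial := by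
      exact_mod_cast congrArg (Nat.cast : ℕ → ℝ) hc
    have f1 : (ij.1.factorial : ℝ) ≠ 0 := Nat.cast_ne_zero.mpr (Nat.factorial_ne_zero _)
    have f2 : (ij.2.factorial : ℝ) ≠ 0 := Nat.cast_ne_zero.mpr (Nat.factorial_ne_zero _)
    have fn : (n.factorial : ℝ) ≠ 0 := Nat.cast_ne_zero.mpr (Nat.factorial_ne_zero _)
    field_simp
    linear_combination (-(shiftedFactorial (1/2) ij.1 * shiftedFactorial (1/2) ij.2)) * hcR
  rw [Finset.sum_congr rfl h3, ← Finset.sum_div, ← key, div_self]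
  exact Nat.cast_ne_zero.mpr (Nat.factorial_ne_zero _)

theorem sqrt_three_series_b :
    Summable (fun k : ℕ => shiftedFactorial (1/2) k / (Nat.factorial k : ℝ) * (-(1 / 131043) : ℝ) ^ k) ∧
    Real.sqrt 3 = (362 / 209 : ℝ) *
      ∑' k : ℕ, shiftedFactorial (1/2) k / (Nat.factorial k : ℝ) * (-(1 / 131043) : ℝ) ^ k := by
  set x : ℝ := -(1/131043) with hx
  set t : ℕ → ℝ := fun k => shiftedFactorial (1/2) k / (Nat.factorial k : ℝ) * x ^ k with ht
  have hq : (0:ℝ) ≤ 1/131043 := by norm_num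
  have hb : ∀ k, ‖t k‖ ≤ (1/131043 : ℝ)^k := by
    intro k
    have f1 : (0:ℝ) < k.factorial := by exact_mod_cast k.factorial_pos
    have h1 : |shiftedFactorial (1/2) k / (k.factorial : ℝ)| ≤ 1 := by
      rw [abs_of_nonneg (div_nonneg (sf_half_nonneg k) f1.le)]
      rw [div_le_one f1]; exact sf_half_le k
    have habsx : |x| = 1/131043 := by rw [hx, abs_neg, abs_of_nonneg hq]
    have : ‖t k‖ = |shiftedFactorial (1/2) k / (k.factorial : ℝ)| * (1/131043:ℝ)^k := by
      rw [ht]; simp only [Real.norm_eq_abs, abs_mul, abs_pow, habsx]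
    rw [this]
    nlinarith [pow_nonneg hq k, abs_nonneg (shiftedFactorial (1/2) k / (k.factorial : ℝ))]
  have hgeo : Summable (fun k : ℕ => (1/131043 : ℝ)^k) :=
    summable_geometric_of_lt_one hq (by norm_num)
  have hnorm : Summable (fun k => ‖t k‖) :=
    Summable.of_nonneg_of_le (fun k => norm_nonneg _) hb hgeo
  have hsum : Summable t := hnorm.of_norm
  refine ⟨hsum, ?_⟩
  set f : ℝ := ∑' k, t k with hf
  -- Cauchy product
  have hcauchy : f * f = ∑' n : ℕ, ∑ ij ∈ antidiagonal n, t ij.1 * t ij.2 :=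
    tsum_mul_tsum_eq_tsum_sum_antidiagonal_of_summable_norm hnorm hnorm
  have hinner : ∀ n : ℕ, ∑ ij ∈ antidiagonal n, t ij.1 * t ij.2 = x ^ n := by
    intro n
    have : ∀ ij ∈ antidiagonal n, t ij.1 * t ij.2 =
        (shiftedFactorial (1/2) ij.1 / (ij.1.factorial : ℝ) *
          (shiftedFactorial (1/2) ij.2 / (ij.2.factorial : ℝ))) * x ^ n := by
      intro ij hij
      have hmem : ij.1 + ij.2 = n := by simpa using (Finset.HasAntidiagonal.mem_antidiagonal.mp hij)
      rw [ht, ← hmem, pow_add]; ring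
    rw [Finset.sum_congr rfl this, ← Finset.sum_mul, vandermonde_half n, one_mul]
  have hxnorm : ‖x‖ < 1 := by rw [hx, Real.norm_eq_abs, abs_neg, abs_of_nonneg hq]; norm_num
  have hf2 : f * f = (1 - x)⁻¹ := by
    rw [hcauchy, tsum_congr hinner, tsum_geometric_of_norm_lt_one hxnorm]
  -- positivity of f
  have hfpos : 0 < f := by
    have hsplit : f = t 0 + ∑' k, t (k+1) := (Summable.tsum_eq_zero_add hsum)
    have ht0 : t 0 = 1 := by simp [ht, shiftedFactorial]
    have hrb : ‖∑' k, t (k+1)‖ ≤ ∑' k : ℕ, (1/131043 : ℝ)^(k+1) := by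
      refine le_trans (norm_tsum_le_tsum_norm (hnorm.comp_injective (add_left_injective 1))) ?_
      exact Summable.tsum_le_tsum (fun k => hb (k+1))
        (hnorm.comp_injective (add_left_injective 1))
        ((summable_nat_add_iff 1).mpr hgeo)
    have hgval : ∑' k : ℕ, (1/131043 : ℝ)^(k+1) = (1/131043) * (1 - 1/131043)⁻¹ := by
      have : ∀ k : ℕ, (1/131043 : ℝ)^(k+1) = (1/131043) * (1/131043)^k := by
        intro k; ring
      rw [tsum_congr this, tsum_mul_left, tsum_geometric_of_lt_one hq (by norm_num)]
    have : ‖∑' k, t (k+1)‖ ≤ (1/131043 : ℝ) * (1 - 1/131043)⁻¹ := by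
      rw [← hgval]; exact hrb
    have habs : |∑' k, t (k+1)| < 1 := by
      rw [← Real.norm_eq_abs]
      refine lt_of_le_of_lt this ?_
      norm_num
    have := abs_lt.mp habs
    rw [hsplit, ht0]; linarith [this.1]
  have hfval : f * f = 131043/131044 := by
    rw [hf2, hx]; norm_num
  have h1 : ((362/209 : ℝ) * f)^2 = 3 := by
    rw [pow_two]
    have : (362/209 : ℝ) * f * ((362/209) * f) = (362/209)^2 * (f * f) := by ring
    rw [this, hfval]; norm_num
  have h2 : (0:ℝ) ≤ (362/209 : ℝ) * f := by positivity
  calc Real.sqrt 3 = Real.sqrt (((362/209 : ℝ) * f)^2) := by rw [h1]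
    _ = (362/209 : ℝ) * f := Real.sqrt_sq h2
end
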